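/- arXiv:2105.08358 — 8 statements merged into one kernel-verified Lean document; each statement's English description precedes it below -/
import Mathlib

section
/- The erasing map is a monoid morphism: for disjoint finite sets R and Σ, the map erase_Σ : (R → (Σ ∪ R)*) → (R → R*), which post-composes each assignment with the morphism deleting all letters of Σ, is a monoid morphism from the monoid of register assignments (under the composition α • β = α⊙ ∘ β) to the monoid of assignments over the empty alphabet, and it sends copyless assignments to copyless assignments. -/
/-- Morphism extension `α⊙` of a register assignment, fixing output letters of `S`. -/
def assignExt {S R : Type*} (α : R → List (S ⊕ R)) : S ⊕ R → List (S ⊕ R)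
  | Sum.inl c => [Sum.inl c]
  | Sum.inr r => α r

/-- Composition of register assignments over the alphabet `S`. -/
def assignComp {S R : Type*} (α β : R → List (S ⊕ R)) : R → List (S ⊕ R) :=
  fun r => (β r).flatMap (assignExt α)

/-- Composition of register assignments over the empty alphabet. -/
def assignComp0 {R : Type*} (α β : R → List R) : R → List R :=
  fun r => (β r).flatMap α

/-- Copylessness over the alphabet `S`. -/
def Copyless {S R : Type*} [Fintype R] [DecidableEq S] [DecidableEq R]
    (α : R → List (S ⊕ R)) : Prop :=
  ∀ r : R, (∑ r' : R, List.count ((Sum.inr r : S ⊕ R)) (α r')) ≤ 1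

/-- Copylessness over the empty alphabet. -/
def Copyless0 {R : Type*} [Fintype R] [DecidableEq R] (α : R → List R) : Prop :=
  ∀ r : R, (∑ r' : R, List.count r (α r')) ≤ 1

/-- `erase_Σ`: delete all letters of `S` from the values of an assignment. -/
def eraseS {S R : Type*} (α : R → List (S ⊕ R)) : R → List R :=
  fun r => (α r).filterMap (fun x => match x with | Sum.inl _ => none | Sum.inr r' => some r')

section Erase

variable {S R : Type*}

theorem eraseS_apply (α : R → List (S ⊕ R)) (r : R) :
    eraseS α r = (α r).filterMap Sum.getRight? := by
  unfold eraseS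
  congr
  funext x
  cases x <;> rfl

theorem filterMap_getRight?_flatMap_assignExt (α : R → List (S ⊕ R)) (l : List (S ⊕ R)) :
    (l.flatMap (assignExt α)).filterMap Sum.getRight? =
      (l.filterMap Sum.getRight?).flatMap (eraseS α) := by
  induction l with
  | nil => rfl
  | cons x l ih => cases x <;> simp [List.filterMap_cons, assignExt, eraseS_apply, ih]

theorem count_filterMap_getRight? [DecidableEq S] [DecidableEq R] (r : R) (l : List (S ⊕ R)) :
    (l.filterMap Sum.getRight?).count r = l.count (Sum.inr r) := by
  rw [List.count_filterMap, List.count_eq_countP]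
  congr
  funext x
  -- `Sum.instBEq` compares componentwise, so both sides reduce to the same `Bool`.
  cases x <;> rfl

theorem eraseS_assignComp (α β : R → List (S ⊕ R)) :
    eraseS (assignComp α β) = assignComp0 (eraseS α) (eraseS β) := by
  funext r
  simp only [eraseS_apply, assignComp, assignComp0, filterMap_getRight?_flatMap_assignExt]

theorem eraseS_id : eraseS (fun r : R => [(Sum.inr r : S ⊕ R)]) = fun r : R => [r] := rfl

theorem Copyless.eraseS [Fintype R] [DecidableEq S] [DecidableEq R] {α : R → List (S ⊕ R)}
    (hα : Copyless α) : Copyless0 (eraseS α) := fun r => by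
  simpa only [eraseS_apply, count_filterMap_getRight?] using hα r

end Erase

theorem erase_monoidHom {S R : Type*} [Fintype R] [DecidableEq S] [DecidableEq R] :
    (∀ α β : R → List (S ⊕ R), eraseS (assignComp α β) = assignComp0 (eraseS α) (eraseS β)) ∧
    (eraseS (fun r : R => [(Sum.inr r : S ⊕ R)]) = fun r : R => [r]) ∧
    (∀ α : R → List (S ⊕ R), Copyless α → Copyless0 (eraseS α)) :=
  ⟨eraseS_assignComp, eraseS_id, fun _ => Copyless.eraseS⟩
end

section
/- Ramsey lemma for splits of words: let φ : Γ* → M be a monoid morphism into a finite monoid M and r ≥ 1. Then there exists N ∈ ℕ such that every word s = uvw ∈ Γ* with |v| ≥ N admits a factorization s = u' v'₁ ⋯ v'_r w' where u is a prefix of u', w is a suffix of w', each v'_i is nonempty, φ(u') = φ(u' v'₁) = ⋯ = φ(u' v'₁ ⋯ v'_r), and φ(w') = φ(v'_r w') = ⋯ = φ(v'₁ ⋯ v'_r w'). -/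
/-!
Colour each cut position `k` of `v` by the pair `(φ (u ++ v.take k), φ (v.drop k ++ w))`.
By pigeonhole, some `r + 1` of the first `|M|² · r + 1` positions share a colour, and cutting `v`
there gives the split: every prefix ending at a cut, and every suffix starting at one, then has
the same image under `φ`.
-/

theorem Finite.exists_monotone_map_eq {α : Type*} [Finite α] (f : ℕ → α) (r : ℕ) :
    ∃ p : ℕ → ℕ, Monotone p ∧ (∀ i < r, p i < p (i + 1)) ∧ p r ≤ Nat.card α * r ∧
      ∀ i, f (p i) = f (p 0) := by
  classical
  have := Fintype.ofFinite α
  obtain ⟨c, hc⟩ := Fintype.exists_lt_card_fiber_of_mul_lt_card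
    (fun k : Fin (Nat.card α * r + 1) => f k) (n := r) (by simp [Nat.card_eq_fintype_card])
  obtain ⟨T, hTc, hT⟩ := Finset.exists_subset_card_eq (Nat.succ_le_of_lt hc)
  set e := T.orderEmbOfFin hT
  have hclamp : Monotone fun i => (⟨min i r, by omega⟩ : Fin (r + 1)) :=
    fun i j hij => Fin.mk_le_mk.2 (min_le_min_right r hij)
  have hcolour (i : Fin (r + 1)) : f (e i) = c :=
    (Finset.mem_filter.1 (hTc (T.orderEmbOfFin_mem hT i))).2
  refine ⟨fun i => e ⟨min i r, by omega⟩, fun i j hij => e.monotone (hclamp hij),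
    ?_, ?_, ?_⟩
  · intro i hi
    exact e.strictMono (Fin.mk_lt_mk.2 (by omega))
  · exact Nat.lt_succ_iff.1 (e _).isLt
  · intro i
    rw [hcolour, hcolour]

namespace List

variable {α : Type*}

theorem take_append_drop_take_of_le (l : List α) {m n : ℕ} (h : m ≤ n) :
    l.take m ++ (l.take n).drop m = l.take n := by
  conv_rhs => rw [← take_append_drop m (l.take n), take_take, min_eq_left h]

theorem drop_take_append_drop_of_le (l : List α) {m n : ℕ} (h : m ≤ n) :
    (l.take n).drop m ++ l.drop n = l.drop m := by
  simpa [drop_take, Nat.add_sub_cancel' h] using drop_take_append_drop l m (n - m)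

def cutSegments (v : List α) (p : ℕ → ℕ) (s n : ℕ) : List (List α) :=
  (range' s n).map fun i => (v.take (p (i + 1))).drop (p i)

variable (v : List α) (p : ℕ → ℕ)

@[simp]
theorem length_cutSegments (s n : ℕ) : (cutSegments v p s n).length = n := by
  simp [cutSegments]

theorem take_cutSegments {s n i : ℕ} (hi : i ≤ n) :
    (cutSegments v p s n).take i = cutSegments v p s i := by
  rw [cutSegments, ← map_take, take_range'_of_length_ge hi, cutSegments]

theorem drop_cutSegments (s n i : ℕ) :
    (cutSegments v p s n).drop i = cutSegments v p (s + i) (n - i) := by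
  rw [cutSegments, ← map_drop, drop_range', Nat.mul_one, cutSegments]

variable {p}

theorem take_append_flatten_cutSegments (hp : Monotone p) (s n : ℕ) :
    v.take (p s) ++ (cutSegments v p s n).flatten = v.take (p (s + n)) := by
  induction n generalizing s with
  | zero => simp [cutSegments]
  | succ n ih =>
    rw [cutSegments, range'_succ, map_cons, flatten_cons, ← append_assoc,
      take_append_drop_take_of_le v (hp (Nat.le_succ s)), ← cutSegments, ih,
      Nat.succ_add, Nat.add_succ]

theorem flatten_cutSegments_append_drop (hp : Monotone p) (s n : ℕ) :
    (cutSegments v p s n).flatten ++ v.drop (p (s + n)) = v.drop (p s) := by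
  induction n generalizing s with
  | zero => simp [cutSegments]
  | succ n ih =>
    rw [cutSegments, range'_succ, map_cons, flatten_cons, append_assoc, ← cutSegments,
      Nat.add_comm n 1, ← Nat.add_assoc, ih, drop_take_append_drop_of_le v (hp (Nat.le_succ s))]

theorem ne_nil_of_mem_cutSegments (hp : Monotone p) {s n : ℕ}
    (hlt : ∀ i ∈ range' s n, p i < p (i + 1)) (hv : p (s + n) ≤ v.length) :
    ∀ x ∈ cutSegments v p s n, x ≠ [] := by
  intro x hx
  obtain ⟨i, hi, rfl⟩ := mem_map.1 hx
  have hle : p (i + 1) ≤ v.length := (hp (by rw [mem_range'_1] at hi; omega)).trans hv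
  have := hlt i hi
  rw [← length_pos_iff, length_drop, length_take, min_eq_left hle]
  omega

end List

theorem ramsey_split_general {Γ M : Type*} [Finite M]
    (φ : List Γ → M)
    (r : ℕ) :
    ∃ N : ℕ, ∀ u v w : List Γ, N ≤ v.length →
      ∃ (u' w' : List Γ) (vs : List (List Γ)),
        vs.length = r ∧
        u ++ v ++ w = u' ++ vs.flatten ++ w' ∧
        u <+: u' ∧ w <:+ w' ∧
        (∀ v' ∈ vs, v' ≠ []) ∧
        (∀ i ≤ r, φ (u' ++ (vs.take i).flatten) = φ u') ∧
        (∀ i ≤ r, φ ((vs.drop i).flatten ++ w') = φ w') := by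
  refine ⟨Nat.card (M × M) * r, fun u v w hv => ?_⟩
  obtain ⟨p, hp, hlt, hpr, hcolour⟩ :=
    Finite.exists_monotone_map_eq (fun k => (φ (u ++ v.take k), φ (v.drop k ++ w))) r
  have hprefix (i : ℕ) (hi : i ≤ r) :
      u ++ v.take (p 0) ++ (v.cutSegments p 0 r |>.take i).flatten = u ++ v.take (p i) := by
    rw [v.take_cutSegments p hi, List.append_assoc, v.take_append_flatten_cutSegments hp, zero_add]
  have hsuffix (i : ℕ) (hi : i ≤ r) :
      (v.cutSegments p 0 r |>.drop i).flatten ++ (v.drop (p r) ++ w) = v.drop (p i) ++ w := by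
    rw [v.drop_cutSegments, ← List.append_assoc, zero_add,
      ← v.flatten_cutSegments_append_drop hp i (r - i), Nat.add_sub_cancel' hi]
  refine ⟨u ++ v.take (p 0), v.drop (p r) ++ w, v.cutSegments p 0 r, v.length_cutSegments p 0 r,
    ?_, List.prefix_append _ _, List.suffix_append _ _,
    v.ne_nil_of_mem_cutSegments hp (fun i hi => hlt i (by rw [List.mem_range'_1] at hi; omega))
      (by rw [zero_add]; exact hpr.trans hv),
    fun i hi => by rw [hprefix i hi]; exact congrArg Prod.fst (hcolour i),
    fun i hi => by
      rw [hsuffix i hi]; exact congrArg Prod.snd ((hcolour i).trans (hcolour r).symm)⟩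
  rw [List.append_assoc (u ++ _), ← List.drop_zero (l := v.cutSegments p 0 r),
    hsuffix 0 (Nat.zero_le r)]
  conv_lhs => rw [← v.take_append_drop (p 0)]
  simp only [List.append_assoc]

theorem ramsey_split {Γ M : Type*} [Monoid M] [Finite M]
    (φ : List Γ → M) (hφ : ∀ x y : List Γ, φ (x ++ y) = φ x * φ y)
    (r : ℕ) (hr : 1 ≤ r) :
    ∃ N : ℕ, ∀ u v w : List Γ, N ≤ v.length →
      ∃ (u' w' : List Γ) (vs : List (List Γ)),
        vs.length = r ∧
        u ++ v ++ w = u' ++ vs.flatten ++ w' ∧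
        u <+: u' ∧ w <:+ w' ∧
        (∀ v' ∈ vs, v' ≠ []) ∧
        (∀ i ≤ r, φ (u' ++ (vs.take i).flatten) = φ u') ∧
        (∀ i ≤ r, φ ((vs.drop i).flatten ++ w') = φ w') :=
  ramsey_split_general φ r
end

section
/- Multi-pumping preserves the 1-split property at each position: let φ : Γ* → M be a morphism and s = α₀ β₁ α₁ ⋯ β_l α_l a factorization such that for each m < l the triple (α₀ β₁ ⋯ α_m, β_{m+1}, α_{m+1} β_{m+2} ⋯ α_l) is a 1-split according to φ. Then for any exponents n₁, …, n_l ∈ ℕ and any m < l, the triple (α₀ β₁^{n₁} ⋯ α_m β_{m+1}^{n_{m+1}}, β_{m+1}, α_{m+1} β_{m+2}^{n_{m+2}} ⋯ α_l) is also a 1-split according to φ. -/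
/-!
Since `φ` is multiplicative, `φ (x ++ y)` depends only on `φ x` and `y`, and `φ (u ++ v) = φ u`
implies `φ (u ++ vᵏ) = φ u` for every `k`. By induction on `m`, using the 1-split at each earlier
position, pumping leaves `φ` of every prefix `α₀ β₀^{n₀} ⋯ α_m` unchanged; symmetrically for the
suffixes. So the 1-split at position `m` transfers from the unpumped to the pumped prefix and
suffix, and pumping `β_m` once more inside the prefix preserves it.
-/

/-- `v` raised to the `n`-th power as a word. -/
def wpow {Γ : Type*} (n : ℕ) (v : List Γ) : List Γ := (List.replicate n v).flatten

/-- The prefix `α₀ β₀^{n₀} α₁ ⋯ β_{m-1}^{n_{m-1}} α_m` of the pumped factorization. -/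
def preW {Γ : Type*} (α β : ℕ → List Γ) (n : ℕ → ℕ) (m : ℕ) : List Γ :=
  α 0 ++ ((List.range m).map (fun j => wpow (n j) (β j) ++ α (j+1))).flatten

/-- The suffix `α_m β_m^{n_m} α_{m+1} ⋯ α_l` of the pumped factorization. -/
def sfxW {Γ : Type*} (α β : ℕ → List Γ) (n : ℕ → ℕ) (l m : ℕ) : List Γ :=
  α m ++ ((List.range (l - m)).map (fun j => wpow (n (m+j)) (β (m+j)) ++ α (m+j+1))).flatten

section Words

variable {Γ : Type*}

lemma wpow_succ (k : ℕ) (v : List Γ) : wpow (k+1) v = v ++ wpow k v := by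
  simp [wpow, List.replicate_succ]

lemma preW_succ (α β : ℕ → List Γ) (n : ℕ → ℕ) (m : ℕ) :
    preW α β n (m+1) = (preW α β n m ++ wpow (n m) (β m)) ++ α (m+1) := by
  simp [preW, List.range_succ]

lemma sfxW_self (α β : ℕ → List Γ) (n : ℕ → ℕ) (l : ℕ) : sfxW α β n l l = α l := by
  simp [sfxW]

lemma sfxW_of_lt (α β : ℕ → List Γ) (n : ℕ → ℕ) {l m : ℕ} (hm : m < l) :
    sfxW α β n l m = α m ++ (wpow (n m) (β m) ++ sfxW α β n l (m+1)) := by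
  obtain ⟨k, hk⟩ : ∃ k, l - m = k + 1 := ⟨l - m - 1, by omega⟩
  have hk' : l - (m+1) = k := by omega
  simp only [sfxW, hk, hk', List.range_succ_eq_map, List.map_cons, List.map_map,
    List.flatten_cons, Nat.add_zero, List.append_assoc]
  congr 4
  exact List.map_congr_left fun i _ => by
    simp only [Function.comp_apply]
    congr 3 <;> omega

end Words

section Multiplicative

variable {Γ M : Type*} [Monoid M] {φ : List Γ → M}

lemma map_append_congr_left (hφ : ∀ x y : List Γ, φ (x ++ y) = φ x * φ y)
    {x x' : List Γ} (hx : φ x = φ x') (y : List Γ) : φ (x ++ y) = φ (x' ++ y) := by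
  rw [hφ, hφ, hx]

lemma map_append_congr_right (hφ : ∀ x y : List Γ, φ (x ++ y) = φ x * φ y)
    {y y' : List Γ} (hy : φ y = φ y') (x : List Γ) : φ (x ++ y) = φ (x ++ y') := by
  rw [hφ, hφ, hy]

lemma map_append_eq_left_of_map_eq (hφ : ∀ x y : List Γ, φ (x ++ y) = φ x * φ y)
    {x x' v : List Γ} (hx : φ x = φ x') (h : φ (x' ++ v) = φ x') : φ (x ++ v) = φ x :=
  (map_append_congr_left hφ hx v).trans (h.trans hx.symm)

lemma map_append_eq_right_of_map_eq (hφ : ∀ x y : List Γ, φ (x ++ y) = φ x * φ y)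
    {w w' v : List Γ} (hw : φ w = φ w') (h : φ (v ++ w') = φ w') : φ (v ++ w) = φ w :=
  (map_append_congr_right hφ hw v).trans (h.trans hw.symm)

lemma map_append_wpow (hφ : ∀ x y : List Γ, φ (x ++ y) = φ x * φ y)
    {x v : List Γ} (h : φ (x ++ v) = φ x) (k : ℕ) : φ (x ++ wpow k v) = φ x := by
  induction k with
  | zero => simp [wpow]
  | succ k ih =>
    rw [wpow_succ, ← List.append_assoc]
    exact (map_append_eq_left_of_map_eq hφ h ih).trans h

lemma map_wpow_append (hφ : ∀ x y : List Γ, φ (x ++ y) = φ x * φ y)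
    {v w : List Γ} (h : φ (v ++ w) = φ w) (k : ℕ) : φ (wpow k v ++ w) = φ w := by
  induction k with
  | zero => simp [wpow]
  | succ k ih => rw [wpow_succ, List.append_assoc, hφ, ih, ← hφ, h]

lemma map_preW_eq (hφ : ∀ x y : List Γ, φ (x ++ y) = φ x * φ y) {l : ℕ}
    {α β : ℕ → List Γ} {n₀ : ℕ → ℕ}
    (h : ∀ m < l, φ (preW α β n₀ m ++ β m) = φ (preW α β n₀ m)) (n : ℕ → ℕ) :
    ∀ m ≤ l, φ (preW α β n m) = φ (preW α β n₀ m) := by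
  intro m hm
  induction m with
  | zero => rfl
  | succ m ih =>
    have hm : m < l := by omega
    have ih := ih hm.le
    have habs := map_append_eq_left_of_map_eq hφ ih (h m hm)
    rw [preW_succ, preW_succ]
    refine map_append_congr_left hφ ?_ _
    exact (map_append_wpow hφ habs _).trans (ih.trans (map_append_wpow hφ (h m hm) _).symm)

lemma map_sfxW_eq (hφ : ∀ x y : List Γ, φ (x ++ y) = φ x * φ y) {l : ℕ}
    {α β : ℕ → List Γ} {n₀ : ℕ → ℕ}
    (h : ∀ m < l, φ (β m ++ sfxW α β n₀ l (m+1)) = φ (sfxW α β n₀ l (m+1))) (n : ℕ → ℕ) :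
    ∀ m ≤ l, φ (sfxW α β n l m) = φ (sfxW α β n₀ l m) := by
  intro m hm
  induction hm using Nat.decreasingInduction with
  | self => rw [sfxW_self, sfxW_self]
  | of_succ m hm ih =>
    have habs := map_append_eq_right_of_map_eq hφ ih (h m hm)
    rw [sfxW_of_lt _ _ _ hm, sfxW_of_lt _ _ _ hm]
    refine map_append_congr_right hφ ?_ _
    exact (map_wpow_append hφ habs _).trans (ih.trans (map_wpow_append hφ (h m hm) _).symm)

end Multiplicative

theorem multi_pump_oneSplits {Γ M : Type*} [Monoid M]
    (φ : List Γ → M) (hφ : ∀ x y : List Γ, φ (x ++ y) = φ x * φ y)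
    (l : ℕ) (α β : ℕ → List Γ)
    (h : ∀ m < l,
      φ (preW α β (fun _ => 1) m ++ β m) = φ (preW α β (fun _ => 1) m) ∧
      φ (β m ++ sfxW α β (fun _ => 1) l (m+1)) = φ (sfxW α β (fun _ => 1) l (m+1))) :
    ∀ n : ℕ → ℕ, ∀ m < l,
      φ ((preW α β n m ++ wpow (n m) (β m)) ++ β m)
          = φ (preW α β n m ++ wpow (n m) (β m)) ∧
      φ (β m ++ sfxW α β n l (m+1)) = φ (sfxW α β n l (m+1)) := by
  intro n m hm
  have hpre := map_preW_eq hφ (fun k hk => (h k hk).1) n m hm.le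
  have hsfx := map_sfxW_eq hφ (fun k hk => (h k hk).2) n (m+1) hm
  have habs := map_append_eq_left_of_map_eq hφ hpre (h m hm).1
  have hpump := map_append_wpow hφ habs (n m)
  exact ⟨(map_append_congr_left hφ hpump _).trans (habs.trans hpump.symm),
    map_append_eq_right_of_map_eq hφ hsfx (h m hm).2⟩
end

section
/- No HDT0L system computes the function aⁿ ↦ (aⁿ b)^{n+1}: for every finite alphabet Δ, every initial word d ∈ Δ*, every monoid morphism h : Δ* → Δ* and every morphism h' : Δ* → {a,b}*, there exists n ∈ ℕ such that h'(hⁿ(d)) ≠ (aⁿ b)^{n+1}. -/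
/-!
If `h'(hⁿ(d)) = (aⁿb)^{n+1}` for all `n`, pigeonhole gives an infinite set `X` of exponents on
which `hⁿ(d)` uses one and the same set `S` of letters. If some `c ∈ S` has an image
`h'(hᵘ(c))` with two `b`s, that image occurs inside `h'(h^{u+N}(d))` for every `N ∈ X`;
choosing `N` larger than the image, the two `b`s are closer than `u + N`, which is impossible in
`(a^{u+N}b)^{u+N+1}`. Otherwise, for `n ∈ X` and `L = |hⁿ(d)|`, every letter of `hⁿ(d)` contributes
at most one `b` to `h'(h^{L+n}(d))`, which therefore has at most `L` of them instead of `L + n + 1`.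
-/

open List

def IsListHom {α β : Type*} (g : List α → List β) : Prop :=
  ∀ x y, g (x ++ y) = g x ++ g y

namespace IsListHom

variable {α β γ : Type*}

theorem map_nil {g : List α → List β} (hg : IsListHom g) : g [] = [] := by
  simpa using congrArg length (hg [] [])

theorem eq_flatMap {g : List α → List β} (hg : IsListHom g) (w : List α) :
    g w = w.flatMap fun c => g [c] := by
  induction w with
  | nil => exact hg.map_nil
  | cons c w ih => rw [flatMap_cons, ← ih, ← hg, singleton_append]

theorem comp {g : List β → List γ} {f : List α → List β} (hg : IsListHom g) (hf : IsListHom f) :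
    IsListHom (g ∘ f) := fun x y => by
  simp only [Function.comp_apply, hf x y, hg (f x) (f y)]

theorem iterate {f : List α → List α} (hf : IsListHom f) (n : ℕ) : IsListHom f^[n] := by
  induction n with
  | zero => exact fun _ _ => rfl
  | succ n ih => rw [Function.iterate_succ]; exact ih.comp hf

theorem infix_of_mem {g : List α → List β} (hg : IsListHom g) {c : α} {w : List α}
    (hc : c ∈ w) : g [c] <:+: g w := by
  obtain ⟨s, t, rfl⟩ := append_of_mem hc
  exact ⟨g s, g t, by rw [← hg, ← hg, append_assoc, singleton_append]⟩

theorem count_le [BEq β] {g : List α → List β} (hg : IsListHom g) {x : β} {b : ℕ} {w : List α}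
    (hb : ∀ c ∈ w, (g [c]).count x ≤ b) : (g w).count x ≤ w.length * b := by
  rw [hg.eq_flatMap, count_flatMap]
  have := sum_le_card_nsmul (w.map fun c => (g [c]).count x) b (by simpa using hb)
  simpa [Function.comp_def, mul_comm] using this

end IsListHom

section PrecededBy

variable {α : Type*}

def PrecededBy (x : α) (p w : List α) : Prop :=
  ∀ u v, w = u ++ x :: v → p <:+ u

theorem precededBy_append_singleton {x : α} {p : List α} (hx : x ∉ p) :
    PrecededBy x p (p ++ [x]) := by
  intro u v huv
  rcases append_eq_append_iff.mp huv with ⟨a, rfl, hxv⟩ | ⟨a, rfl, hxv⟩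
  · obtain rfl : a = [] := by
      have := congrArg length hxv
      simp only [length_append, length_cons, length_nil] at this
      exact length_eq_zero_iff.mp (by omega)
    simp
  · cases a with
    | nil => simp
    | cons y a =>
      obtain ⟨rfl, -⟩ : x = y ∧ _ := by simpa using hxv
      simp at hx

theorem PrecededBy.append {x : α} {p u v : List α} (hu : PrecededBy x p u)
    (hv : PrecededBy x p v) : PrecededBy x p (u ++ v) := by
  intro a b hab
  rcases append_eq_append_iff.mp hab with ⟨c, rfl, hvc⟩ | ⟨c, rfl, hvc⟩
  · exact (hv c b hvc).trans (suffix_append u c)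
  · cases c with
    | nil =>
      obtain rfl : p = [] := suffix_nil.mp (hv [] b (by simpa using hvc.symm))
      exact nil_suffix
    | cons y c =>
      obtain ⟨rfl, -⟩ : x = y ∧ _ := by simpa using hvc
      exact hu a c rfl

theorem PrecededBy.flatten {x : α} {p : List α} {L : List (List α)}
    (hL : ∀ w ∈ L, PrecededBy x p w) : PrecededBy x p L.flatten := by
  induction L with
  | nil => intro u v h; simp at h
  | cons w L ih =>
    simp only [mem_cons, forall_eq_or_imp] at hL
    exact hL.1.append (ih hL.2)

theorem PrecededBy.length_le {x : α} {p q w : List α} (hw : PrecededBy x p w) (hx : x ∉ p)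
    (hq : x :: q ++ [x] <:+: w) : p.length ≤ q.length := by
  obtain ⟨s, t, rfl⟩ := hq
  have hp : p <:+ s ++ x :: q := hw _ t (by simp)
  by_contra! hlt
  exact hx ((suffix_of_suffix_length_le (suffix_append s _) hp hlt).subset mem_cons_self)

theorem precededBy_flatten_replicate {x : α} {p : List α} (hx : x ∉ p) (k : ℕ) :
    PrecededBy x p (replicate k (p ++ [x])).flatten :=
  PrecededBy.flatten fun _ hw => eq_of_mem_replicate hw ▸ precededBy_append_singleton hx

end PrecededBy

theorem count_flatten_replicate_append_singleton {α : Type*} [BEq α] [LawfulBEq α] {x : α}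
    {p : List α} (hx : x ∉ p) (k : ℕ) : (replicate k (p ++ [x])).flatten.count x = k := by
  simp [count_flatten, count_eq_zero_of_not_mem hx]

theorem exists_cons_append_singleton_infix {α : Type*} [BEq α] [LawfulBEq α] {x : α}
    {z : List α} (h : 2 ≤ z.count x) : ∃ q, x :: q ++ [x] <:+: z := by
  obtain ⟨r₁, r₂, rfl, h₁, h₂⟩ := cons_sublist_iff.mp (replicate_sublist_iff.mpr h)
  obtain ⟨s, a, rfl⟩ := append_of_mem h₁
  obtain ⟨b, c, rfl⟩ := append_of_mem (singleton_sublist.mp h₂)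
  exact ⟨a ++ b, s, c, by simp⟩

/-- No HDT0L system with unary input computes `aⁿ ↦ (aⁿb)^{n+1}`.
Here the output alphabet `{a,b}` is encoded as `Bool` with `a = true`, `b = false`. -/
theorem hdt0l_not_anb {Δ : Type*} [Fintype Δ]
    (d : List Δ) (h : List Δ → List Δ) (h' : List Δ → List Bool)
    (hh : ∀ x y : List Δ, h (x ++ y) = h x ++ h y)
    (hh' : ∀ x y : List Δ, h' (x ++ y) = h' x ++ h' y) :
    ∃ n : ℕ, h' (h^[n] d) ≠
      (List.replicate (n+1) (List.replicate n true ++ [false])).flatten := by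
  by_contra! hout
  have hg (u : ℕ) : IsListHom (h' ∘ h^[u]) := IsListHom.comp hh' (IsListHom.iterate hh u)
  have hb (M : ℕ) : false ∉ replicate M true := by simp
  obtain ⟨S, hX⟩ := Finite.exists_infinite_fiber fun n => {c | c ∈ h^[n] d}
  replace hX := Set.infinite_coe_iff.mp hX
  have hS {n} (hn : n ∈ (fun n => {c | c ∈ h^[n] d}) ⁻¹' {S}) (c : Δ) : c ∈ h^[n] d ↔ c ∈ S :=
    Set.ext_iff.mp hn c
  by_cases htwo : ∃ u, ∃ c ∈ S, 2 ≤ (h' (h^[u] [c])).count false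
  · obtain ⟨u, c, hc, h2⟩ := htwo
    obtain ⟨q, hq⟩ := exists_cons_append_singleton_infix h2
    obtain ⟨N, hN, hlen⟩ := hX.exists_gt (h' (h^[u] [c])).length
    have hinf : false :: q ++ [false] <:+: h' (h^[u + N] d) := by
      rw [Function.iterate_add_apply]
      exact hq.trans ((hg u).infix_of_mem ((hS hN c).mpr hc))
    have hfar := (hout (u + N) ▸ precededBy_flatten_replicate (hb _) _).length_le (hb _) hinf
    have hclose := hq.length_le
    simp only [length_append, length_cons, length_nil, length_replicate] at hfar hclose
    omega
  · push Not at htwo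
    obtain ⟨n, hn⟩ := hX.nonempty
    have hle := (hg (h^[n] d).length).count_le (x := false) (b := 1)
      fun c hc => Nat.le_of_lt_succ (htwo _ c ((hS hn c).mp hc))
    rw [Function.comp_apply, ← Function.iterate_add_apply, hout,
      count_flatten_replicate_append_singleton (hb _)] at hle
    omega
end

section
/- No HDT0L system over an alphabet Σ with at least two letters computes w ↦ w^{|w|}: if |Σ| ≥ 2, there is no tuple (Δ, d, (h_c)_{c∈Σ}, h') with Δ finite, d ∈ Δ*, monoid morphisms h_c : Δ* → Δ* and h' : Δ* → Σ* such that h'(h_{w₁} ∘ ⋯ ∘ h_{w_n}(d)) = w^{|w|} for every w = w₁ ⋯ w_n ∈ Σ*. -/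
/-!
Reading the inputs `aⁿ b` reduces the claim to the unary system `g = h a`, `d' = h b d`, which
would compute `aⁿ ↦ (aⁿ b)ⁿ⁺¹`. Then `h' (gᴺ (gʲ d'))` is the concatenation of the blocks
`h' (gᴺ c)` over the letters `c` of `gʲ d'`. Take `N ≥ |gʲ d'|` for all `j ≤ |Δ|`: the `N + j + 1`
letters `b` of `(a^(N+j) b)^(N+j+1)` force some block `h' (gᴺ c_j)` to contain two `b`s, and
between them it reads `a^(N+j)`. So `c_j` determines `j`, and `c_0, …, c_|Δ|` would be `|Δ| + 1`
distinct letters of `Δ`.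
-/

open List

def IsAppendHom {α β : Type*} (f : List α → List β) : Prop :=
  ∀ x y, f (x ++ y) = f x ++ f y

namespace IsAppendHom

variable {α β γ : Type*} {f : List α → List β}

lemma map_nil (hf : IsAppendHom f) : f [] = [] := by
  simpa using hf [] []

lemma comp {g : List β → List γ} (hg : IsAppendHom g) (hf : IsAppendHom f) :
    IsAppendHom (g ∘ f) := fun x y => by simp [hf x y, hg _ _]

lemma iterate {f : List α → List α} (hf : IsAppendHom f) (n : ℕ) : IsAppendHom f^[n] := by
  induction n with
  | zero => intro x y; rfl
  | succ n ih => intro x y; simp only [Function.iterate_succ_apply', ih x y, hf _ _]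

lemma eq_flatten_map (hf : IsAppendHom f) (l : List α) :
    f l = (l.map fun c => f [c]).flatten := by
  induction l with
  | nil => exact hf.map_nil
  | cons c l ih => rw [← singleton_append, hf, ih]; rfl

end IsAppendHom

namespace List

variable {α : Type*} {b : α}

lemma exists_eq_append_cons_notMem {l : List α} (hb : b ∈ l) :
    ∃ s t, l = s ++ b :: t ∧ b ∉ s := by
  induction l with
  | nil => simp at hb
  | cons c l ih =>
    by_cases hc : c = b
    · exact ⟨[], l, by simp [hc], not_mem_nil⟩
    · obtain ⟨s, t, rfl, hs⟩ := ih ((mem_cons.1 hb).resolve_left (Ne.symm hc))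
      exact ⟨c :: s, t, rfl, by simp [hs, Ne.symm hc]⟩

lemma exists_eq_append_cons_append_cons_notMem [DecidableEq α] {l : List α}
    (hl : 2 ≤ l.count b) : ∃ x y z, l = x ++ b :: (y ++ b :: z) ∧ b ∉ y := by
  have hb : 0 < l.count b := by omega
  obtain ⟨x, t, rfl, hx⟩ := exists_eq_append_cons_notMem (count_pos_iff.1 hb)
  have ht : 0 < t.count b := by
    simp only [count_append, count_cons_self, count_eq_zero.2 hx] at hl; omega
  obtain ⟨y, z, rfl, hy⟩ := exists_eq_append_cons_notMem (count_pos_iff.1 ht)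
  exact ⟨x, y, z, rfl, hy⟩

lemma eq_of_append_cons_eq_append_cons {x₁ x₂ z₁ z₂ : List α} (h₁ : b ∉ x₁) (h₂ : b ∉ x₂)
    (h : x₁ ++ b :: z₁ = x₂ ++ b :: z₂) : x₁ = x₂ ∧ z₁ = z₂ := by
  induction x₁ generalizing x₂ with
  | nil =>
    cases x₂ with
    | nil => simpa using h
    | cons c x₂ => simp only [nil_append, cons_append, cons.injEq] at h; simp [h.1] at h₂
  | cons c x₁ ih =>
    cases x₂ with
    | nil => simp only [nil_append, cons_append, cons.injEq] at h; simp [h.1] at h₁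
    | cons c' x₂ =>
      simp only [cons_append, cons.injEq] at h
      obtain ⟨rfl, h⟩ := h
      simpa using
        ih (fun hb => h₁ (mem_cons_of_mem _ hb)) (fun hb => h₂ (mem_cons_of_mem _ hb)) h

lemma mem_of_cons_append_infix_flatten_map {L : List (List α)} (hL : ∀ x ∈ L, b ∉ x)
    {y : List α} (hy : b ∉ y) (h : b :: (y ++ [b]) <:+: (L.map (· ++ [b])).flatten) : y ∈ L := by
  obtain ⟨s, z, h⟩ := h
  simp only [append_assoc, cons_append] at h
  induction L generalizing s with
  | nil => simp at h
  | cons x L ih =>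
    simp only [map_cons, flatten_cons, append_assoc, singleton_append] at h
    by_cases hs : b ∈ s
    · obtain ⟨s₁, s₂, rfl, hs₁⟩ := exists_eq_append_cons_notMem hs
      simp only [append_assoc, cons_append] at h
      exact mem_cons_of_mem _ (ih (fun x hx => hL x (mem_cons_of_mem _ hx)) s₂
        (eq_of_append_cons_eq_append_cons hs₁ (hL x mem_cons_self) h).2)
    · have hL' := (eq_of_append_cons_eq_append_cons hs (hL x mem_cons_self) h).2
      cases L with
      | nil => simp at hL'
      | cons x' L =>
        simp only [map_cons, flatten_cons, append_assoc, singleton_append] at hL'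
        rw [(eq_of_append_cons_eq_append_cons hy (hL x' (by simp)) hL').1]
        simp

lemma eq_of_infix_flatten_replicate [DecidableEq α] {a : α} (hab : a ≠ b) {v : List α}
    (hv : 2 ≤ v.count b) {k k' m m' : ℕ}
    (h : v <:+: (replicate k (replicate m a ++ [b])).flatten)
    (h' : v <:+: (replicate k' (replicate m' a ++ [b])).flatten) : m = m' := by
  obtain ⟨x, y, z, rfl, hy⟩ := exists_eq_append_cons_append_cons_notMem hv
  have hgap : ∀ {k m : ℕ},
      x ++ b :: (y ++ b :: z) <:+: (replicate k (replicate m a ++ [b])).flatten →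
        y = replicate m a := by
    intro k m hk
    refine eq_of_mem_replicate (n := k) (mem_of_cons_append_infix_flatten_map ?_ hy ?_)
    · intro u hu
      simp [eq_of_mem_replicate hu, hab.symm]
    · rw [map_replicate]
      exact IsInfix.trans ⟨x, z, by simp⟩ hk
  simpa using congrArg length ((hgap h).symm.trans (hgap h'))

lemma count_flatten_replicate [DecidableEq α] {a : α} (hab : a ≠ b) (k m : ℕ) :
    (replicate k (replicate m a ++ [b])).flatten.count b = k := by
  simp [count_flatten, count_replicate, hab]

lemma foldr_replicate_append_singleton {σ β : Type*} (h : σ → β → β) (a b : σ) (n : ℕ)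
    (d : β) : (replicate n a ++ [b]).foldr h d = (h a)^[n] (h b d) := by
  induction n with
  | zero => rfl
  | succ n ih => rw [replicate_succ, cons_append, foldr_cons, ih, Function.iterate_succ_apply']

end List

theorem not_forall_iterate_eq_flatten_replicate {α Δ : Type*} [Finite Δ] [DecidableEq α]
    {a b : α} (hab : a ≠ b) (d : List Δ) {g : List Δ → List Δ} {f : List Δ → List α}
    (hg : IsAppendHom g) (hf : IsAppendHom f) :
    ¬ ∀ n, f (g^[n] d) = (replicate (n + 1) (replicate n a ++ [b])).flatten := by
  intro H
  set D := Nat.card Δ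
  set N := (Finset.range (D + 1)).sup fun j => (g^[j] d).length
  set v : Δ → List α := fun c => f (g^[N] [c])
  have hsplit : ∀ j, ((g^[j] d).map v).flatten =
      (replicate (N + j + 1) (replicate (N + j) a ++ [b])).flatten := fun j => by
    have := (hf.comp (hg.iterate N)).eq_flatten_map (g^[j] d)
    rw [Function.comp_apply, ← Function.iterate_add_apply, H] at this
    exact this.symm
  have hexists : ∀ j : Fin (D + 1), ∃ c ∈ g^[j] d, 2 ≤ (v c).count b := by
    intro j
    by_contra! hsmall
    have hlen : (g^[j] d).length ≤ N :=
      Finset.le_sup (f := fun j => (g^[j] d).length) (Finset.mem_range.2 j.isLt)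
    have hsum := congrArg (count b) (hsplit j)
    rw [count_flatten, map_map, count_flatten_replicate hab] at hsum
    have hle : ((g^[j] d).map (count b ∘ v)).sum ≤ (g^[j] d).length := by
      simpa using sum_le_card_nsmul ((g^[j] d).map (count b ∘ v)) 1
        (by simpa [Nat.lt_succ_iff] using hsmall)
    omega
  choose c hc_mem hc_count using hexists
  have hinj : Function.Injective c := by
    intro j j' hjj'
    have hinfix :
        ∀ j, v (c j) <:+: (replicate (N + j + 1) (replicate (N + j) a ++ [b])).flatten :=
      fun j => hsplit j ▸ infix_of_mem_flatten (mem_map_of_mem (hc_mem j))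
    have := eq_of_infix_flatten_replicate hab (hc_count j) (hinfix j) (hjj' ▸ hinfix j')
    exact Fin.ext (by omega)
  simpa [D] using Nat.card_le_card_of_injective c hinj

/-- No HDT0L system over an alphabet with at least two letters computes `w ↦ w^{|w|}`. -/
theorem hdt0l_not_wpow {S Δ : Type*} [Fintype S] [Fintype Δ]
    (hcard : 2 ≤ Fintype.card S)
    (d : List Δ) (h : S → List Δ → List Δ) (h' : List Δ → List S)
    (hh : ∀ (c : S) (x y : List Δ), h c (x ++ y) = h c x ++ h c y)
    (hh' : ∀ x y : List Δ, h' (x ++ y) = h' x ++ h' y) :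
    ¬ ∀ w : List S,
        h' (w.foldr (fun c acc => h c acc) d) = (List.replicate w.length w).flatten := by
  classical
  obtain ⟨a, b, hab⟩ := Fintype.exists_pair_of_one_lt_card hcard
  intro H
  refine not_forall_iterate_eq_flatten_replicate hab (h b d) (hh a) hh' fun n => ?_
  have hw := H (replicate n a ++ [b])
  rwa [foldr_replicate_append_singleton, length_append, length_replicate, length_singleton] at hw
end

section
/- Poly-pumping sequences are poly-uniform: for every polynomial word expression e over a finite alphabet Σ and every letter c ∈ Σ, there exists a finite set A ⊆ ℚ[X] of polynomials such that for all n ∈ ℕ, every maximal block of consecutive c's in the word ⟦e⟧(n) has length P(n) for some P ∈ A. -/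
/-!
A maximal `c`-block of `u ++ v` is a block of `u`, a block of `v`, or the last `c`-run of `u`
glued to the first `c`-run of `v`. So once `0` is adjoined to the sets of block lengths, the set
for `u ++ v` lies in the sumset of those for `u` and `v`. In `uⁿ` every glued block has the same
length, last run plus first run of `u`, unless `u` consists of `c`'s only, and then `uⁿ` is the
single block `c^(n|u|)`. By induction on `e`, the block lengths of `⟦e⟧(n)` are therefore values
at `n` of polynomials from a finite set generated from constants by sums and multiplication by `X`.
-/

/-- Polynomial word expressions: `e ::= w | e · e' | e*`. -/
inductive PolyExpr (S : Type*) where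
  | word : List S → PolyExpr S
  | cat : PolyExpr S → PolyExpr S → PolyExpr S
  | star : PolyExpr S → PolyExpr S

/-- The poly-pumping sequence `⟦e⟧ : ℕ → S*`. -/
def PolyExpr.eval {S : Type*} : PolyExpr S → ℕ → List S
  | .word w, _ => w
  | .cat e e', n => e.eval n ++ e'.eval n
  | .star e, n => (List.replicate n (e.eval n)).flatten

/-- `β_c(u)`: the set of lengths of maximal blocks of consecutive `c`'s in `u`. -/
def maxBlocks {S : Type*} (c : S) (u : List S) : Set ℕ :=
  {k | ∃ x y : List S, u = x ++ List.replicate k c ++ y ∧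
        x.getLast? ≠ some c ∧ y.head? ≠ some c}

open scoped Pointwise

namespace List

variable {S : Type*} {c : S}

section Runs

variable [DecidableEq S]

def headRun (c : S) (u : List S) : ℕ := (u.takeWhile (· = c)).length

def lastRun (c : S) (u : List S) : ℕ := headRun c u.reverse

theorem exists_eq_replicate_headRun_append (c : S) (u : List S) :
    ∃ y, u = replicate (headRun c u) c ++ y ∧ y.head? ≠ some c := by
  refine ⟨u.dropWhile (· = c), ?_, ?_⟩
  · have hrep : u.takeWhile (· = c) = replicate (headRun c u) c :=
      eq_replicate_iff.mpr ⟨rfl, fun a ha => by simpa using mem_takeWhile_imp ha⟩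
    rw [← hrep, takeWhile_append_dropWhile]
  · intro h
    have := head?_dropWhile_not (· = c) u
    rw [h] at this
    simp at this

theorem headRun_replicate_append {y : List S} (j : ℕ) (hy : y.head? ≠ some c) :
    headRun c (replicate j c ++ y) = j := by
  cases y <;> simp_all [headRun]

theorem headRun_append_of_mem {a : S} {u : List S} (w : List S) (ha : a ∈ u) (hac : a ≠ c) :
    headRun c (u ++ w) = headRun c u := by
  obtain ⟨y, hu, hy⟩ := exists_eq_replicate_headRun_append c u
  obtain ⟨b, t, rfl⟩ : ∃ b t, y = b :: t := by
    refine y.exists_cons_of_ne_nil ?_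
    rintro rfl
    exact hac (eq_of_mem_replicate (by rwa [hu, append_nil] at ha))
  nth_rewrite 1 [hu]
  rw [append_assoc, headRun_replicate_append _ (by simpa using hy)]

theorem exists_eq_append_replicate_lastRun (c : S) (u : List S) :
    ∃ x, u = x ++ replicate (lastRun c u) c ∧ x.getLast? ≠ some c := by
  obtain ⟨y, hu, hy⟩ := exists_eq_replicate_headRun_append c u.reverse
  refine ⟨y.reverse, ?_, by simpa using hy⟩
  simpa [lastRun] using congrArg reverse hu

theorem lastRun_append_replicate {x : List S} (i : ℕ) (hx : x.getLast? ≠ some c) :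
    lastRun c (x ++ replicate i c) = i := by
  simpa [lastRun] using headRun_replicate_append (y := x.reverse) i (by simpa using hx)

theorem headRun_mem_maxBlocks (c : S) (u : List S) : headRun c u ∈ maxBlocks c u := by
  obtain ⟨y, hu, hy⟩ := exists_eq_replicate_headRun_append c u
  exact ⟨[], y, by simpa using hu, by simp, hy⟩

theorem lastRun_mem_maxBlocks (c : S) (u : List S) : lastRun c u ∈ maxBlocks c u := by
  obtain ⟨x, hu, hx⟩ := exists_eq_append_replicate_lastRun c u
  exact ⟨x, [], by simpa using hu, hx, by simp⟩

theorem mem_maxBlocks_append {u v : List S} {k : ℕ} (hk : k ∈ maxBlocks c (u ++ v)) :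
    k ∈ maxBlocks c u ∨ k ∈ maxBlocks c v ∨ k = lastRun c u + headRun c v := by
  obtain ⟨x, y, hxy, hx, hy⟩ := hk
  rw [append_assoc] at hxy
  rcases append_eq_append_iff.mp hxy with ⟨s, rfl, rfl⟩ | ⟨s, rfl, hs⟩
  · refine Or.inr (Or.inl ⟨s, y, by rw [append_assoc], ?_, hy⟩)
    cases s <;> simp_all
  rcases append_eq_append_iff.mp hs.symm with ⟨t, hst, rfl⟩ | ⟨t, hrep, rfl⟩
  · obtain ⟨rfl, hs, ht⟩ := replicate_eq_append_iff.mp hst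
    right; right
    conv_rhs => rw [hs, ht]
    rw [lastRun_append_replicate _ hx, headRun_replicate_append _ hy]
  · refine Or.inl ⟨x, t, by rw [hrep, append_assoc], hx, ?_⟩
    cases t <;> simp_all

end Runs

theorem maxBlocks_replicate_subset (c : S) (N : ℕ) : maxBlocks c (replicate N c) ⊆ {N} := by
  rintro k ⟨x, y, hxy, hx, hy⟩
  obtain ⟨hlen, hxk, hy'⟩ := append_eq_replicate_iff.mp hxy.symm
  obtain ⟨-, hx', -⟩ := append_eq_replicate_iff.mp hxk
  rw [hx', getLast?_replicate] at hx
  rw [hy', head?_replicate] at hy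
  obtain rfl : x = [] := by simpa using hx
  obtain rfl : y = [] := by simpa using hy
  simpa [eq_comm] using hlen

end List

open List Polynomial

section

variable {S : Type*}

def blockLengths (c : S) (u : List S) : Set ℕ := insert 0 (maxBlocks c u)

theorem zero_mem_blockLengths (c : S) (u : List S) : 0 ∈ blockLengths c u :=
  Set.mem_insert 0 _

theorem le_length_of_mem_maxBlocks {c : S} {u : List S} {k : ℕ} (hk : k ∈ maxBlocks c u) :
    k ≤ u.length := by
  obtain ⟨x, y, rfl, -, -⟩ := hk
  simp only [length_append, length_replicate]
  omega

theorem blockLengths_subset_Iic (c : S) (u : List S) : blockLengths c u ⊆ Set.Iic u.length := by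
  rintro k (rfl | hk)
  · exact Nat.zero_le _
  · exact le_length_of_mem_maxBlocks hk

theorem blockLengths_append_subset (c : S) (u v : List S) :
    blockLengths c (u ++ v) ⊆ blockLengths c u + blockLengths c v := by
  classical
  rintro k (rfl | hk)
  · exact ⟨0, zero_mem_blockLengths c u, 0, zero_mem_blockLengths c v, rfl⟩
  rcases mem_maxBlocks_append hk with h | h | rfl
  · exact ⟨k, .inr h, 0, zero_mem_blockLengths c v, rfl⟩
  · exact ⟨0, zero_mem_blockLengths c u, k, .inr h, zero_add k⟩
  · exact Set.add_mem_add (.inr (lastRun_mem_maxBlocks c u)) (.inr (headRun_mem_maxBlocks c v))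

theorem maxBlocks_flatten_replicate_subset_of_mem {c a : S} {u : List S} (ha : a ∈ u)
    (hac : a ≠ c) (n : ℕ) :
    maxBlocks c (replicate n u).flatten ⊆ blockLengths c u + blockLengths c u := by
  classical
  have hzero := zero_mem_blockLengths c u
  induction n with
  | zero =>
    intro k hk
    obtain rfl : k = 0 := maxBlocks_replicate_subset c 0 hk
    exact ⟨0, hzero, 0, hzero, rfl⟩
  | succ m ih =>
    intro k hk
    rw [replicate_succ, flatten_cons] at hk
    rcases mem_maxBlocks_append hk with h | h | rfl
    · exact ⟨k, .inr h, 0, hzero, rfl⟩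
    · exact ih h
    -- the glued block is `lastRun c u + headRun c u`, or just `lastRun c u` when `m = 0`
    cases m with
    | zero => exact ⟨lastRun c u, .inr (lastRun_mem_maxBlocks c u), 0, hzero, rfl⟩
    | succ m =>
      rw [replicate_succ, flatten_cons, headRun_append_of_mem _ ha hac]
      exact Set.add_mem_add (.inr (lastRun_mem_maxBlocks c u)) (.inr (headRun_mem_maxBlocks c u))

theorem blockLengths_flatten_replicate_subset (c : S) (u : List S) (n : ℕ) :
    blockLengths c (replicate n u).flatten ⊆
      (blockLengths c u + blockLengths c u) ∪ (n * ·) '' blockLengths c u := by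
  by_cases hu : ∃ a ∈ u, a ≠ c
  · obtain ⟨a, ha, hac⟩ := hu
    rintro k (rfl | hk)
    · exact .inl ⟨0, zero_mem_blockLengths c u, 0, zero_mem_blockLengths c u, rfl⟩
    · exact .inl (maxBlocks_flatten_replicate_subset_of_mem ha hac n hk)
  push Not at hu
  have hrep : u = replicate u.length c := eq_replicate_iff.mpr ⟨rfl, hu⟩
  have hlen : u.length ∈ maxBlocks c u := ⟨[], [], by simpa using hrep, by simp, by simp⟩
  rintro k (rfl | hk)
  · exact .inr ⟨0, zero_mem_blockLengths c u, mul_zero n⟩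
  rw [hrep, flatten_replicate_replicate] at hk
  exact .inr ⟨u.length, .inr hlen, (maxBlocks_replicate_subset c _ hk).symm⟩

def IsPolyUniform (F : ℕ → Set ℕ) : Prop :=
  ∃ A : Finset ℚ[X], ∀ n, ∀ k ∈ F n, ∃ P ∈ A, (k : ℚ) = P.eval (n : ℚ)

namespace IsPolyUniform

variable {F G : ℕ → Set ℕ}

theorem mono (hG : IsPolyUniform G) (h : ∀ n, F n ⊆ G n) : IsPolyUniform F := by
  obtain ⟨A, hA⟩ := hG
  exact ⟨A, fun n k hk => hA n k (h n hk)⟩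

theorem of_subset_Iic (N : ℕ) (h : ∀ n, F n ⊆ Set.Iic N) : IsPolyUniform F := by
  refine ⟨(Finset.range (N + 1)).image fun m : ℕ => C (m : ℚ), fun n k hk => ⟨C (k : ℚ), ?_, ?_⟩⟩
  · exact Finset.mem_image_of_mem _ (Finset.mem_range.mpr (Nat.lt_succ_of_le (h n hk)))
  · rw [eval_C]

theorem union (hF : IsPolyUniform F) (hG : IsPolyUniform G) :
    IsPolyUniform fun n => F n ∪ G n := by
  obtain ⟨A, hA⟩ := hF
  obtain ⟨B, hB⟩ := hG
  refine ⟨A ∪ B, fun n k hk => ?_⟩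
  rcases hk with hk | hk
  · obtain ⟨P, hP, hk⟩ := hA n k hk
    exact ⟨P, Finset.mem_union_left B hP, hk⟩
  · obtain ⟨P, hP, hk⟩ := hB n k hk
    exact ⟨P, Finset.mem_union_right A hP, hk⟩

theorem add (hF : IsPolyUniform F) (hG : IsPolyUniform G) :
    IsPolyUniform fun n => F n + G n := by
  obtain ⟨A, hA⟩ := hF
  obtain ⟨B, hB⟩ := hG
  refine ⟨Finset.image₂ (· + ·) A B, ?_⟩
  rintro n _ ⟨i, hi, j, hj, rfl⟩
  obtain ⟨P, hP, hi⟩ := hA n i hi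
  obtain ⟨Q, hQ, hj⟩ := hB n j hj
  exact ⟨P + Q, Finset.mem_image₂_of_mem hP hQ, by rw [eval_add, Nat.cast_add, hi, hj]⟩

theorem image_mul (hF : IsPolyUniform F) : IsPolyUniform fun n => (n * ·) '' F n := by
  obtain ⟨A, hA⟩ := hF
  refine ⟨A.image (X * ·), ?_⟩
  rintro n _ ⟨k, hk, rfl⟩
  obtain ⟨P, hP, hk⟩ := hA n k hk
  exact ⟨X * P, Finset.mem_image_of_mem _ hP, by rw [eval_mul, eval_X, Nat.cast_mul, hk]⟩

end IsPolyUniform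

theorem isPolyUniform_blockLengths (c : S) :
    ∀ e : PolyExpr S, IsPolyUniform fun n => blockLengths c (e.eval n)
  | .word w => .of_subset_Iic w.length fun _ => blockLengths_subset_Iic c w
  | .cat e e' =>
    ((isPolyUniform_blockLengths c e).add (isPolyUniform_blockLengths c e')).mono
      fun n => blockLengths_append_subset c (e.eval n) (e'.eval n)
  | .star e =>
    have he := isPolyUniform_blockLengths c e
    ((he.add he).union he.image_mul).mono
      fun n => blockLengths_flatten_replicate_subset c (e.eval n) n

end

theorem polyPumping_polyUniform_general {S : Type*} (e : PolyExpr S) (c : S) :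
    ∃ A : Finset (Polynomial ℚ), ∀ n : ℕ, ∀ k ∈ maxBlocks c (e.eval n),
      ∃ P ∈ A, (k : ℚ) = P.eval (n : ℚ) :=
  (isPolyUniform_blockLengths c e).mono fun _ => Set.subset_insert 0 _

theorem polyPumping_polyUniform {S : Type*} [Fintype S] (e : PolyExpr S) (c : S) :
    ∃ A : Finset (Polynomial ℚ), ∀ n : ℕ, ∀ k ∈ maxBlocks c (e.eval n),
      ∃ P ∈ A, (k : ℚ) = P.eval (n : ℚ) :=
  polyPumping_polyUniform_general e c
end

section
/- Ultimately periodic combinations of poly-uniform sequences are poly-uniform: let s : ℕ → Σ* and m > 0 be such that for every k < m the sequence n ↦ s(m(n+1) + k) is poly-uniform. Then s is poly-uniform. -/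
/-- A sequence of words is poly-uniform when, for each letter `c`, a finite set of
polynomials covers all maximal `c`-block lengths. -/
def PolyUniform {S : Type*} (s : ℕ → List S) : Prop :=
  ∀ c : S, ∃ A : Finset (Polynomial ℚ), ∀ n : ℕ, ∀ k ∈ maxBlocks c (s n),
    ∃ P ∈ A, (k : ℚ) = P.eval (n : ℚ)

theorem polyUniform_of_ultimately_periodic {S : Type*} (s : ℕ → List S)
    (m : ℕ) (hm : 0 < m)
    (h : ∀ k < m, PolyUniform (fun n => s (m * (n + 1) + k))) :
    PolyUniform s := by
  classical
  intro c
  -- choose covering families for each residue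
  have hA : ∀ k : ℕ, ∃ A : Finset (Polynomial ℚ), k < m →
      ∀ n : ℕ, ∀ j ∈ maxBlocks c (s (m * (n + 1) + k)),
        ∃ P ∈ A, (j : ℚ) = P.eval (n : ℚ) := by
    intro k
    by_cases hk : k < m
    · obtain ⟨A, hA⟩ := h k hk c
      exact ⟨A, fun _ => hA⟩
    · exact ⟨∅, fun hk' => absurd hk' hk⟩
  choose A hA using hA
  set L := (Finset.range m).sup (fun i => (s i).length) with hL
  refine ⟨((Finset.range m).biUnion (fun k => (A k).image (fun P =>
      P.comp (Polynomial.C ((m:ℚ))⁻¹ * Polynomial.X + Polynomial.C (-(k:ℚ)/m - 1)))))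
    ∪ (Finset.range (L+1)).image (fun j : ℕ => Polynomial.C ((j : ℚ))), ?_⟩
  intro n k hk
  by_cases hn : n < m
  · -- constant polynomial case
    have hlen : k ≤ (s n).length := by
      obtain ⟨x, y, hxy, -, -⟩ := hk
      have hlen' : (s n).length = x.length + (k + y.length) := by
        rw [hxy]; simp
      omega
    have hkL : k ≤ L := le_trans hlen (Finset.le_sup (f := fun i => (s i).length)
      (Finset.mem_range.mpr hn))
    refine ⟨Polynomial.C (k:ℚ), ?_, by simp⟩
    exact Finset.mem_union_right _ (Finset.mem_image_of_mem _
      (Finset.mem_range.mpr (Nat.lt_succ_of_le hkL)))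
  · -- periodic case
    push_neg at hn
    have hr : n % m < m := Nat.mod_lt _ hm
    have hdm : m * (n / m) + n % m = n := Nat.div_add_mod n m
    have h1 : 1 ≤ n / m := (Nat.one_le_div_iff hm).mpr hn
    have h2 : n / m - 1 + 1 = n / m := by omega
    have hq : n = m * ((n / m - 1) + 1) + n % m := by rw [h2]; exact hdm.symm
    obtain ⟨P, hP, hPk⟩ := hA (n % m) hr (n / m - 1) k (by rw [← hq]; exact hk)
    set r := n % m with hr'
    set q := n / m - 1 with hq'
    refine ⟨P.comp (Polynomial.C ((m:ℚ))⁻¹ * Polynomial.X + Polynomial.C (-(r:ℚ)/m - 1)),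
      ?_, ?_⟩
    · exact Finset.mem_union_left _ (Finset.mem_biUnion.mpr
        ⟨r, Finset.mem_range.mpr hr, Finset.mem_image.mpr ⟨P, hP, rfl⟩⟩)
    · have hm0 : (m:ℚ) ≠ 0 := Nat.cast_ne_zero.mpr hm.ne'
      have hn' : (n:ℚ) = m * (q + 1) + r := by exact_mod_cast congrArg (Nat.cast : ℕ → ℚ) hq
      rw [Polynomial.eval_comp]
      simp only [Polynomial.eval_add, Polynomial.eval_mul, Polynomial.eval_C, Polynomial.eval_X]
      have : ((m:ℚ))⁻¹ * (n:ℚ) + (-(r:ℚ)/m - 1) = (q:ℚ) := by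
        rw [hn']; field_simp; ring
      rw [this, hPk]
end

section
/- Idempotent copyless assignments fix their nonempty register words as single-occurrence patterns: let R be a finite set and β : R → R* a copyless assignment with β • β = β. Then for every r ∈ R with β(r) ≠ ε, there exist ρ₀, ρ₁ ∈ R* such that β(r) = ρ₀ r ρ₁ (with exactly one occurrence of r) and β*(ρ₀) = β*(ρ₁) = ε, where β* : R* → R* is the monoid-morphism extension of β. -/
theorem exists_mem_ne_nil_of_flatMap_eq_self {R : Type*} {β : R → List R} {s : R}
    (hidem : (β s).flatMap β = β s) (hs : β s ≠ []) : ∃ t ∈ β s, β t ≠ [] := by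
  by_contra! h
  exact hs (hidem ▸ List.flatMap_eq_nil_iff.mpr h)

section

variable {R : Type*} [Fintype R] [DecidableEq R] {β : R → List R}

namespace Copyless0

theorem eq_of_mem_of_mem (hcl : Copyless0 β) {t s₁ s₂ : R} (h₁ : t ∈ β s₁)
    (h₂ : t ∈ β s₂) : s₁ = s₂ := by
  by_contra hne
  have hpair : (β s₁).count t + (β s₂).count t ≤ 1 :=
    calc (β s₁).count t + (β s₂).count t = ∑ r ∈ {s₁, s₂}, (β r).count t :=
          (Finset.sum_pair (f := fun r => (β r).count t) hne).symm
      _ ≤ ∑ r, (β r).count t := Finset.sum_le_sum_of_subset (Finset.subset_univ _)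
      _ ≤ 1 := hcl t
  have := List.count_pos_iff.mpr h₁
  have := List.count_pos_iff.mpr h₂
  omega

theorem nodup (hcl : Copyless0 β) (s : R) : (β s).Nodup :=
  List.nodup_iff_count_le_one.mpr fun t =>
    (Finset.single_le_sum (f := fun r => (β r).count t) (fun _ _ => Nat.zero_le _)
      (Finset.mem_univ s)).trans (hcl t)

end Copyless0

theorem exists_bijOn_mem_of_idempotent (hcl : Copyless0 β)
    (hidem : ∀ r : R, (β r).flatMap β = β r) :
    ∃ f : R → R, Set.BijOn f {r | β r ≠ []} {r | β r ≠ []} ∧ ∀ s, β s ≠ [] → f s ∈ β s := by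
  have hchoice (s : R) : ∃ t, β s ≠ [] → t ∈ β s ∧ β t ≠ [] := by
    by_cases hs : β s = []
    · exact ⟨s, fun h => absurd hs h⟩
    · obtain ⟨t, ht, htne⟩ := exists_mem_ne_nil_of_flatMap_eq_self (hidem s) hs
      exact ⟨t, fun _ => ⟨ht, htne⟩⟩
  choose f hf using hchoice
  have hmaps : Set.MapsTo f {r | β r ≠ []} {r | β r ≠ []} := fun s hs => (hf s hs).2
  have hinj : Set.InjOn f {r | β r ≠ []} := fun s₁ h₁ s₂ h₂ heq =>
    hcl.eq_of_mem_of_mem (hf s₁ h₁).1 (heq ▸ (hf s₂ h₂).1)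
  exact ⟨f, ((Set.toFinite _).injOn_iff_bijOn_of_mapsTo hmaps).mp hinj, fun s hs => (hf s hs).1⟩

theorem exists_mem_of_ne_nil (hcl : Copyless0 β) (hidem : ∀ r : R, (β r).flatMap β = β r)
    {r : R} (hr : β r ≠ []) : ∃ s, r ∈ β s := by
  obtain ⟨f, hbij, hf⟩ := exists_bijOn_mem_of_idempotent hcl hidem
  obtain ⟨s, hs, rfl⟩ := hbij.surjOn hr
  exact ⟨s, hf s hs⟩

theorem eq_of_mem_of_ne_nil (hcl : Copyless0 β) (hidem : ∀ r : R, (β r).flatMap β = β r)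
    {s t u : R} (ht : t ∈ β s) (hu : u ∈ β s) (htne : β t ≠ []) (hune : β u ≠ []) : t = u := by
  obtain ⟨f, hbij, hf⟩ := exists_bijOn_mem_of_idempotent hcl hidem
  have key {v : R} (hv : v ∈ β s) (hvne : β v ≠ []) : v = f s := by
    obtain ⟨s', hs', rfl⟩ := hbij.surjOn hvne
    rw [hcl.eq_of_mem_of_mem (hf s' hs') hv]
  rw [key ht htne, key hu hune]

theorem exists_eq_append_of_mem (hcl : Copyless0 β) (hidem : ∀ r : R, (β r).flatMap β = β r)
    {r s : R} (hr : β r ≠ []) (hrs : r ∈ β s) :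
    ∃ ρ₀ ρ₁ : List R, β s = ρ₀ ++ [r] ++ ρ₁ ∧ r ∉ ρ₀ ∧ r ∉ ρ₁ ∧
      ρ₀.flatMap β = [] ∧ ρ₁.flatMap β = [] := by
  obtain ⟨ρ₀, ρ₁, hsplit⟩ := List.append_of_mem hrs
  have hnodup : (ρ₀ ++ r :: ρ₁).Nodup := hsplit ▸ hcl.nodup s
  have hr₀ : r ∉ ρ₀ := fun h =>
    (List.nodup_append.mp hnodup).2.2 r h r List.mem_cons_self rfl
  have hr₁ : r ∉ ρ₁ := (List.nodup_cons.mp (List.nodup_append.mp hnodup).2.1).1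
  have hinactive {u : R} (hu : u ∈ β s) (hur : u ≠ r) : β u = [] := by
    by_contra hune
    exact hur (eq_of_mem_of_ne_nil hcl hidem hu hrs hune hr)
  refine ⟨ρ₀, ρ₁, by simp [hsplit], hr₀, hr₁, ?_, ?_⟩
  · exact List.flatMap_eq_nil_iff.mpr fun u hu =>
      hinactive (by simp [hsplit, hu]) (ne_of_mem_of_not_mem hu hr₀)
  · exact List.flatMap_eq_nil_iff.mpr fun u hu =>
      hinactive (by simp [hsplit, hu]) (ne_of_mem_of_not_mem hu hr₁)

end

theorem idempotent_copyless_fixed_register {R : Type*} [Fintype R] [DecidableEq R]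
    (β : R → List R) (hcl : Copyless0 β)
    (hidem : ∀ r : R, (β r).flatMap β = β r) :
    ∀ r : R, β r ≠ [] →
      ∃ ρ₀ ρ₁ : List R, β r = ρ₀ ++ [r] ++ ρ₁ ∧
        ρ₀.count r = 0 ∧ ρ₁.count r = 0 ∧
        ρ₀.flatMap β = [] ∧ ρ₁.flatMap β = [] := by
  intro r hr
  obtain ⟨s, hrs⟩ := exists_mem_of_ne_nil hcl hidem hr
  obtain ⟨ρ₀, ρ₁, hsplit, hr₀, hr₁, h₀, h₁⟩ := exists_eq_append_of_mem hcl hidem hr hrs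
  have hsr : β s = β r := by
    rw [← hidem s, hsplit]
    simp [List.flatMap_append, h₀, h₁]
  exact ⟨ρ₀, ρ₁, hsr ▸ hsplit, List.count_eq_zero.mpr hr₀, List.count_eq_zero.mpr hr₁,
    h₀, h₁⟩
end
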